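/- arXiv:1001.4895 — 5 statements merged into one kernel-verified Lean document; each statement's English description precedes it below -/
import Mathlib

section
/- Let G be a topological abelian group such that every countable subgroup of G is h-embedded in G. Then every countable subgroup of G is closed in G. -/
open Topology Filter Set

noncomputable section

/-- A topological space is *pseudocompact* if every continuous real-valued function
defined on it is bounded. -/
def IsPseudocompact (X : Type*) [TopologicalSpace X] : Prop :=
  ∀ f : X → ℝ, Continuous f → Bornology.IsBounded (Set.range f)

/-- A subgroup `D` of a topological abelian group `G` is *h-embedded* in `G` if every
(not necessarily continuous) homomorphism from `D` to the circle group extends to a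
continuous homomorphism from `G` to the circle group. -/
def IsHEmbedded {G : Type*} [CommGroup G] [TopologicalSpace G] (D : Subgroup G) : Prop :=
  ∀ f : D →* Circle, ∃ g : G →* Circle, Continuous g ∧ ∀ x : D, g x = f x

/-- The canonical evaluation homomorphism `α_G : G → G^∧∧`, `α_G(x)(χ) = χ(x)`,
where the dual groups carry the compact-open topology.  `G` is *reflexive* when this
map is a topological isomorphism, i.e. `IsHomeomorph ⇑(pontrEval G)`. -/
def pontrEval (G : Type*) [CommGroup G] [TopologicalSpace G] :
    G →* PontryaginDual (PontryaginDual G) where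
  toFun x :=
    { toFun := fun χ => χ x
      map_one' := rfl
      map_mul' := fun χ ψ => rfl
      continuous_toFun := by
        have h : Continuous fun χ : PontryaginDual G => χ.toContinuousMap x :=
          (continuous_eval_const x).comp
            (ContinuousMonoidHom.isInducing_toContinuousMap G Circle).continuous
        exact h }
  map_one' := ContinuousMonoidHom.ext fun χ => map_one χ
  map_mul' x y := ContinuousMonoidHom.ext fun χ => map_mul χ x y

/-!
Let `H` be a countable subgroup and `x ∈ closure H`. The subgroup `K = H ⊔ ⟨x⟩` is countable,
hence h-embedded. If `x ∉ H`, a character of the discrete group `K ⧸ H` not vanishing at `x`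
extends to a continuous character of `G` that is trivial on `H`, hence on `closure H ∋ x`,
but not at `x`.
-/

def ratAddCircleToReal : AddCircle (1 : ℚ) →+ AddCircle (1 : ℝ) :=
  QuotientAddGroup.map _ _ (Rat.castHom ℝ).toAddMonoidHom <|
    AddSubgroup.zmultiples_le.mpr ⟨1, by simp⟩

theorem ratAddCircleToReal_injective : Function.Injective ratAddCircleToReal := by
  refine (injective_iff_map_eq_zero _).mpr fun z hz => ?_
  induction z using QuotientAddGroup.induction_on with
  | H q =>
    obtain ⟨n, hn⟩ := (AddCircle.coe_eq_zero_iff (1 : ℝ)).mp hz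
    have hnq : ((n : ℚ) : ℝ) = q := by simpa using hn
    exact (AddCircle.coe_eq_zero_iff (1 : ℚ)).mpr ⟨n, by simpa using Rat.cast_injective hnq⟩

theorem CommGroup.exists_monoidHom_circle_apply_ne_one {A : Type*} [CommGroup A] {a : A}
    (ha : a ≠ 1) : ∃ χ : A →* Circle, χ a ≠ 1 := by
  obtain ⟨c, hc⟩ :=
    CharacterModule.exists_character_apply_ne_zero_of_ne_zero (A := Additive A) ha
  let φ := ratAddCircleToReal.comp c
  refine ⟨{ toFun := fun g => AddCircle.toCircle (φ (Additive.ofMul g))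
            map_one' := by simp
            map_mul' := fun x y => by simp [AddCircle.toCircle_add] }, fun h => hc ?_⟩
  have hφ : φ (Additive.ofMul a) = 0 :=
    AddCircle.injective_toCircle one_ne_zero (h.trans AddCircle.toCircle_zero.symm)
  exact ratAddCircleToReal_injective (hφ.trans (map_zero _).symm)

theorem IsHEmbedded.mem_of_mem_closure {G : Type*} [CommGroup G] [TopologicalSpace G]
    {K H : Subgroup G} (hK : IsHEmbedded K) (hHK : H ≤ K) {x : G} (hxK : x ∈ K)
    (hx : x ∈ closure (H : Set G)) : x ∈ H := by
  by_contra hxH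
  have hx_ne : QuotientGroup.mk' (H.subgroupOf K) ⟨x, hxK⟩ ≠ 1 := by
    rwa [Ne, QuotientGroup.mk'_apply, QuotientGroup.eq_one_iff, Subgroup.mem_subgroupOf]
  obtain ⟨χ, hχ⟩ := CommGroup.exists_monoidHom_circle_apply_ne_one hx_ne
  obtain ⟨g, hg_cont, hg_ext⟩ := hK (χ.comp (QuotientGroup.mk' (H.subgroupOf K)))
  have hH_ker : (H : Set G) ⊆ g ⁻¹' {1} := fun h hh => by
    have hq : QuotientGroup.mk' (H.subgroupOf K) ⟨h, hHK hh⟩ = 1 :=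
      (QuotientGroup.eq_one_iff _).mpr hh
    show g (⟨h, hHK hh⟩ : K) = 1
    rw [hg_ext, MonoidHom.comp_apply, hq, map_one]
  have hgx : g x = 1 := closure_minimal hH_ker (isClosed_singleton.preimage hg_cont) hx
  exact hχ ((hg_ext ⟨x, hxK⟩).symm.trans hgx)

theorem Subgroup.countable_sup_zpowers {G : Type*} [CommGroup G] {H : Subgroup G}
    (hH : (H : Set G).Countable) (x : G) : ((H ⊔ zpowers x : Subgroup G) : Set G).Countable := by
  rw [Subgroup.mul_normal, ← Set.image2_mul]
  exact hH.image2 (Set.countable_range _) _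

theorem statement2_general (G : Type*) [CommGroup G] [TopologicalSpace G]
    (hemb : ∀ H : Subgroup G, (H : Set G).Countable → IsHEmbedded H) :
    ∀ H : Subgroup G, (H : Set G).Countable → IsClosed (H : Set G) := by
  intro H hH
  refine isClosed_of_closure_subset fun x hx => ?_
  exact (hemb _ (Subgroup.countable_sup_zpowers hH x)).mem_of_mem_closure le_sup_left
    (Subgroup.mem_sup_right (Subgroup.mem_zpowers x)) hx

/-- If every countable subgroup of a topological abelian group `G` is
h-embedded in `G`, then every countable subgroup of `G` is closed in `G`. -/
theorem statement2 (G : Type*) [CommGroup G] [TopologicalSpace G] [IsTopologicalGroup G]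
    (hemb : ∀ H : Subgroup G, (H : Set G).Countable → IsHEmbedded H) :
    ∀ H : Subgroup G, (H : Set G).Countable → IsClosed (H : Set G) :=
  statement2_general G hemb

end
end

section
/- Let G be a Hausdorff pseudocompact topological abelian group. Then every compact subset of the dual group G^∧ (with the compact-open topology) is finite. -/
/-!
If `K` contained infinitely many characters `χₙ`, the diagonal map `e = (χₙ)ₙ : G → 𝕋^ℕ` would
have a compact metrizable image `H`, because a continuous image of a pseudocompact space in a
metrizable space is closed. Characters of `G` trivial on `ker e` descend to characters of `H`,
continuous by pseudocompactness again, and those in `K` form a set of characters of `H` that is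
compact for pointwise convergence. On a compact metrizable group such a set is finite: otherwise
it contains an injective sequence `ψₖ` converging pointwise to a character `ψ`, and
`∫ ψₖ / ψ dμ` is `0` by orthogonality but tends to `μ H > 0` by dominated convergence.
-/

open Topology Filter Set

noncomputable section

open MeasureTheory

instance PontryaginDual.instContinuousEvalConst {G : Type*} [Monoid G] [TopologicalSpace G] :
    ContinuousEvalConst (PontryaginDual G) G Circle :=
  inferInstanceAs (ContinuousEvalConst (G →ₜ* Circle) G Circle)

instance Subgroup.metrizableSpace {X : Type*} [Group X] [TopologicalSpace X]
    [TopologicalSpace.MetrizableSpace X] (N : Subgroup X) : TopologicalSpace.MetrizableSpace N :=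
  inferInstanceAs (TopologicalSpace.MetrizableSpace (N : Set X))

lemma IsPseudocompact.isClosed_range {G X : Type*} [TopologicalSpace G] [TopologicalSpace X]
    [TopologicalSpace.MetrizableSpace X] (hps : IsPseudocompact G) {ϕ : G → X}
    (hϕ : Continuous ϕ) : IsClosed (range ϕ) := by
  let _ : MetricSpace X := TopologicalSpace.metrizableSpaceMetric X
  rw [← closure_subset_iff_isClosed]
  intro p hp
  by_contra hpr
  have hd : ∀ x, 0 < dist (ϕ x) p := fun x => dist_pos.mpr fun h => hpr ⟨x, h⟩
  -- `x ↦ 1 / d(ϕ x, p)` is continuous but unbounded, as `p` is a limit of values of `ϕ`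
  obtain ⟨r, hr⟩ := (hps (fun x => (dist (ϕ x) p)⁻¹)
    ((hϕ.dist continuous_const).inv₀ fun x => (hd x).ne')).subset_closedBall 0
  obtain ⟨_, ⟨x, rfl⟩, hx⟩ := Metric.mem_closure_iff.mp hp (|r| + 1)⁻¹ (by positivity)
  have hle : (dist (ϕ x) p)⁻¹ ≤ |r| := by
    simpa [Real.dist_eq, abs_of_pos (inv_pos.mpr (hd x))] using
      (hr ⟨x, rfl⟩).trans (le_abs_self r)
  have hge : |r| + 1 ≤ (dist (ϕ x) p)⁻¹ :=
    (le_inv_comm₀ (by positivity) (hd x)).mpr (dist_comm p (ϕ x) ▸ hx.le)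
  linarith

lemma IsPseudocompact.continuous_of_continuous_comp {G X Y : Type*} [TopologicalSpace G]
    [TopologicalSpace X] [CompactSpace X] [TopologicalSpace.MetrizableSpace X]
    [TopologicalSpace Y] [CompactSpace Y] [TopologicalSpace.MetrizableSpace Y]
    (hps : IsPseudocompact G) {e : G → X} (he : Continuous e) (he' : Function.Surjective e)
    {g : X → Y} (hg : Continuous (g ∘ e)) : Continuous g := by
  let P := range fun x => (e x, g (e x))
  have hP : IsCompact P := (hps.isClosed_range (he.prodMk hg)).isCompact
  refine continuous_iff_isClosed.mpr fun C hC => ?_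
  have hpre : g ⁻¹' C = Prod.fst '' (P ∩ Prod.snd ⁻¹' C) := by
    ext x
    obtain ⟨x, rfl⟩ := he' x
    constructor
    · exact fun hx => ⟨_, ⟨⟨x, rfl⟩, hx⟩, rfl⟩
    · rintro ⟨_, ⟨⟨y, rfl⟩, hy⟩, hyx⟩
      rwa [← hyx]
  rw [hpre]
  exact ((hP.inter_right (hC.preimage continuous_snd)).image continuous_fst).isClosed

lemma IsCompact.exists_injective_seq_tendsto {Z M : Type*} [TopologicalSpace Z]
    [TopologicalSpace M] [TopologicalSpace.MetrizableSpace M] {S : Set Z} (hS : IsCompact S)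
    (hinf : S.Infinite) {Θ : Z → M} (hΘ : Continuous Θ) (hinj : S.InjOn Θ) :
    ∃ x ∈ S, ∃ u : ℕ → Z, (∀ k, u k ∈ S) ∧ Function.Injective u ∧ Tendsto u atTop (𝓝 x) := by
  have : CompactSpace S := isCompact_iff_compactSpace.mp hS
  have : TopologicalSpace.MetrizableSpace S :=
    ((hΘ.comp continuous_subtype_val).isClosedEmbedding hinj.injective).isEmbedding.metrizableSpace
  have : Infinite S := hinf.to_subtype
  let v : ℕ ↪ S := Infinite.natEmbedding S
  obtain ⟨x, -, φ, hφ, hlim⟩ := isCompact_univ.tendsto_subseq fun n => mem_univ (v n)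
  exact ⟨x, x.2, fun k => v (φ k), fun k => (v (φ k)).2,
    Subtype.val_injective.comp (v.injective.comp hφ.injective),
    (continuous_subtype_val.tendsto x).comp hlim⟩

section Characters

variable {H : Type*} [CommGroup H] [TopologicalSpace H]

lemma PontryaginDual.integral_eq_zero_of_ne_one [MeasurableSpace H] [MeasurableMul H]
    (μ : Measure H) [μ.IsMulLeftInvariant] {σ : PontryaginDual H} (hσ : σ ≠ 1) :
    ∫ h, (σ h : ℂ) ∂μ = 0 := by
  obtain ⟨a, ha⟩ : ∃ a, σ a ≠ 1 := by
    by_contra! h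
    exact hσ (PontryaginDual.ext h)
  have hinv := integral_mul_left_eq_self (μ := μ) (fun h => (σ h : ℂ)) a
  simp only [_root_.map_mul σ, Circle.coe_mul, integral_const_mul] at hinv
  exact (mul_left_eq_self₀.mp hinv).resolve_left fun h => ha (Circle.coe_eq_one.mp h)

lemma PontryaginDual.not_tendsto_of_injective [MeasurableSpace H] [MeasurableMul H]
    [OpensMeasurableSpace H] (μ : Measure H) [μ.IsMulLeftInvariant] [IsFiniteMeasure μ] [NeZero μ]
    {ψ : ℕ → PontryaginDual H} (hψ : Function.Injective ψ) (ψ₀ : PontryaginDual H) :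
    ¬ ∀ h, Tendsto (fun k => ψ k h) atTop (𝓝 (ψ₀ h)) := by
  intro hlim
  have hzero : ∀ᶠ k in atTop, ∫ h, ((ψ k / ψ₀) h : ℂ) ∂μ = 0 := by
    rw [← Nat.cofinite_eq_atTop]
    filter_upwards [hψ.tendsto_cofinite.eventually (eventually_cofinite_ne ψ₀)] with k hk
    exact integral_eq_zero_of_ne_one μ (div_ne_one.mpr hk)
  have hconv : Tendsto (fun k => ∫ h, ((ψ k / ψ₀) h : ℂ) ∂μ) atTop (𝓝 (∫ _, (1 : ℂ) ∂μ)) := by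
    refine tendsto_integral_of_dominated_convergence (fun _ => 1)
      (fun k => (continuous_subtype_val.comp (ψ k / ψ₀).continuous).aestronglyMeasurable)
      (integrable_const 1) (fun k => ae_of_all _ fun h => (Circle.norm_coe _).le)
      (ae_of_all _ fun h => ?_)
    have hlim' := (continuous_subtype_val.tendsto _).comp ((hlim h).div_const' (ψ₀ h))
    rw [div_self', Circle.coe_one] at hlim'
    exact hlim'
  have := tendsto_nhds_unique hconv (tendsto_const_nhds.congr' (hzero.mono fun k hk => hk.symm))
  simp only [integral_const, Complex.real_smul, mul_one, Complex.ofReal_eq_zero] at this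
  exact measureReal_univ_ne_zero this

theorem PontryaginDual.finite_of_isCompact_image_coe [IsTopologicalGroup H] [CompactSpace H]
    [TopologicalSpace.MetrizableSpace H] {S : Set (PontryaginDual H)}
    (hS : IsCompact ((⇑) '' S : Set (H → Circle))) : S.Finite := by
  let _ := TopologicalSpace.metrizableSpaceMetric H
  let _ : MeasurableSpace H := borel H
  have : BorelSpace H := ⟨rfl⟩
  refine Set.not_infinite.mp fun hinf => ?_
  obtain ⟨q, hq⟩ := TopologicalSpace.exists_dense_seq H
  have hinj : ((⇑) '' S).InjOn fun (f : H → Circle) n => f (q n) := by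
    rintro _ ⟨σ, -, rfl⟩ _ ⟨τ, -, rfl⟩ h
    exact hq.equalizer (map_continuous σ) (map_continuous τ) h
  obtain ⟨_, ⟨ψ₀, -, rfl⟩, u, hu, huinj, hlim⟩ := hS.exists_injective_seq_tendsto
    (hinf.image DFunLike.coe_injective.injOn) (continuous_pi fun n => continuous_apply (q n)) hinj
  choose ψ _ hψ using hu
  refine not_tendsto_of_injective Measure.haar (ψ := ψ) (fun i j hij => huinj ?_) ψ₀
    fun h => ?_
  · rw [← hψ i, ← hψ j, hij]
  · simpa only [hψ] using tendsto_pi_nhds.mp hlim h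

end Characters

lemma PontryaginDual.isClosed_setOf_le_ker {G : Type*} [CommGroup G] [TopologicalSpace G]
    (N : Subgroup G) : IsClosed {φ : PontryaginDual G | N ≤ φ.toMonoidHom.ker} := by
  simp only [SetLike.le_def, MonoidHom.mem_ker, ofPred_forall]
  exact isClosed_iInter fun x => isClosed_iInter fun _ =>
    isClosed_eq (continuous_eval_const x) continuous_const

section Pseudocompact

variable {G X : Type*} [CommGroup G] [TopologicalSpace G] [CommGroup X] [TopologicalSpace X]
  [CompactSpace X] [TopologicalSpace.MetrizableSpace X]

lemma IsPseudocompact.compactSpace_range (hps : IsPseudocompact G) {e : G →* X}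
    (he : Continuous e) : CompactSpace e.range :=
  isCompact_iff_compactSpace.mp (hps.isClosed_range he).isCompact

lemma IsPseudocompact.exists_pontryaginDual_range (hps : IsPseudocompact G) {e : G →* X}
    (he : Continuous e) {φ : PontryaginDual G} (hφ : e.ker ≤ φ.toMonoidHom.ker) :
    ∃ ψ : PontryaginDual e.range, ∀ x, ψ (e.rangeRestrict x) = φ x := by
  have := hps.compactSpace_range he
  have hr := Function.rightInverse_surjInv e.rangeRestrict_surjective
  let ψ : e.range →* Circle := e.rangeRestrict.liftOfRightInverse _ hr
    ⟨φ.toMonoidHom, by rwa [MonoidHom.ker_rangeRestrict]⟩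
  have hψ : ∀ x, ψ (e.rangeRestrict x) = φ x :=
    e.rangeRestrict.liftOfRightInverse_comp_apply _ hr _
  refine ⟨⟨ψ, hps.continuous_of_continuous_comp (he.subtype_mk _)
    e.rangeRestrict_surjective ?_⟩, hψ⟩
  convert φ.continuous using 1
  exact funext hψ

theorem IsPseudocompact.finite_of_le_ker (hps : IsPseudocompact G) [IsTopologicalGroup X]
    {e : G →* X} (he : Continuous e) {K : Set (PontryaginDual G)} (hK : IsCompact K)
    (hker : ∀ φ ∈ K, e.ker ≤ φ.toMonoidHom.ker) : K.Finite := by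
  have := hps.compactSpace_range he
  let rep := Function.surjInv e.rangeRestrict_surjective
  choose! ψ hψ using fun φ hφ => hps.exists_pontryaginDual_range he (hker φ hφ)
  have hcoe : ∀ φ ∈ K, ⇑(ψ φ) = fun h => φ (rep h) := fun φ hφ => funext fun h => by
    rw [← hψ φ hφ, Function.surjInv_eq e.rangeRestrict_surjective]
  have hcomp : IsCompact ((⇑) '' (ψ '' K) : Set (e.range → Circle)) := by
    rw [image_image, image_congr hcoe]
    exact hK.image (continuous_pi fun h => continuous_eval_const (rep h))
  refine (PontryaginDual.finite_of_isCompact_image_coe hcomp).of_finite_image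
    fun φ hφ φ' hφ' h => PontryaginDual.ext fun x => ?_
  rw [← hψ φ hφ, ← hψ φ' hφ', h]

end Pseudocompact

theorem statement6_general (G : Type*) [CommGroup G] [TopologicalSpace G] (hps : IsPseudocompact G) :
    ∀ K : Set (PontryaginDual G), IsCompact K → K.Finite := by
  intro K hK
  refine Set.not_infinite.mp fun hinf => ?_
  let χ : ℕ ↪ K := hinf.natEmbedding
  let e : G →* (ℕ → Circle) := MonoidHom.pi fun n => (χ n : PontryaginDual G).toMonoidHom
  have he : Continuous e := continuous_pi fun n => (χ n : PontryaginDual G).continuous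
  let K' := K ∩ {φ | e.ker ≤ φ.toMonoidHom.ker}
  have hK' : IsCompact K' := hK.inter_right (PontryaginDual.isClosed_setOf_le_ker e.ker)
  have hχ : ∀ n, (χ n : PontryaginDual G) ∈ K' := fun n => ⟨(χ n).2, fun x hx => congrFun hx n⟩
  exact infinite_of_injective_forall_mem (Subtype.val_injective.comp χ.injective) hχ
    (hps.finite_of_le_ker he hK' fun φ hφ => hφ.2)

/-- For a Hausdorff pseudocompact topological abelian group `G`, every compact
subset of the dual group `G^∧` (with the compact-open topology) is finite. -/
theorem statement6 (G : Type*) [CommGroup G] [TopologicalSpace G] [IsTopologicalGroup G]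
    [T2Space G] (hps : IsPseudocompact G) :
    ∀ K : Set (PontryaginDual G), IsCompact K → K.Finite :=
  statement6_general G hps

end
end

section
/- Let G be a reflexive Hausdorff topological abelian group. Then G is precompact if and only if every compact subset of the dual group G^∧ (with the compact-open topology) is finite. -/
open Topology Filter Set

noncomputable section

/-!
If `G` is precompact, continuity of `α_G` makes every compact `K ⊆ G^∧` equicontinuous. On an
equicontinuous set, closeness of two characters on a finite net of the precompact `G` forces
uniform closeness, and uniformly close characters coincide because `𝕋` has no small subgroups.
So `K` is discrete, hence finite.

Conversely, if compact subsets of `G^∧` are finite, the compact-open topology on `G^∧∧` is the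
topology of pointwise convergence. Since `α_G` is an embedding, `G` then carries the topology
induced by the homomorphism `G → 𝕋^(G^∧)` into a compact group, which makes `G` precompact.
-/

open scoped Real

theorem ContinuousMap.isInducing_coeFn_of_forall_isCompact_finite {X Y : Type*}
    [TopologicalSpace X] [TopologicalSpace Y] (h : ∀ K : Set X, IsCompact K → K.Finite) :
    IsInducing ((⇑) : C(X, Y) → X → Y) := by
  refine ⟨le_antisymm continuous_coeFun.le_induced ?_⟩
  rw [compactOpen_eq]
  refine le_generateFrom ?_
  rintro _ ⟨K, hK, U, hU : IsOpen U, rfl⟩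
  have hopen : IsOpen (⋂ x ∈ K, (fun g : X → Y => g x) ⁻¹' U) :=
    (h K hK).isOpen_biInter fun x _ => hU.preimage (continuous_apply x)
  exact ⟨_, hopen, by ext; simp [MapsTo]⟩

theorem totallyBounded_of_isInducing_monoidHom {G H : Type*} [CommGroup G] [TopologicalSpace G]
    [IsTopologicalGroup G] [CommGroup H] [TopologicalSpace H] [IsTopologicalGroup H]
    [CompactSpace H] {φ : G →* H} (hφ : IsInducing φ) :
    @TotallyBounded G (IsTopologicalGroup.rightUniformSpace G) univ := by
  let := IsTopologicalGroup.rightUniformSpace G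
  let := IsTopologicalGroup.rightUniformSpace H
  have := isUniformGroup_of_commGroup (G := G)
  have := isUniformGroup_of_commGroup (G := H)
  simpa using totallyBounded_preimage (MonoidHom.isUniformInducing_of_isInducing hφ)
    isCompact_univ.totallyBounded

theorem PontryaginDual.eq_of_forall_div_mem_centeredArc {G : Type*} [Monoid G]
    [TopologicalSpace G] {χ ψ : PontryaginDual G}
    (h : ∀ x, χ x / ψ x ∈ Circle.centeredArc (π / 2)) : χ = ψ := by
  refine PontryaginDual.ext fun x => ?_
  rw [← div_eq_one]
  refine Circle.eq_one_of_forall_pow_mem_centeredArc_pi_div_two fun n _ => ?_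
  simpa only [map_pow, div_pow] using h (x ^ n)

theorem Circle.centeredArc_mem_nhds_one {r : ℝ} (hr : 0 < r) : Circle.centeredArc r ∈ 𝓝 1 :=
  (Circle.isOpen_centeredArc r).mem_nhds ⟨0, by simpa using hr, Circle.exp_zero⟩

section Dual

variable {G : Type*} [CommGroup G] [TopologicalSpace G]

theorem equicontinuousAt_one_of_continuousAt_pontrEval (hα : ContinuousAt (pontrEval G) 1)
    {K : Set (PontryaginDual G)} (hK : IsCompact K) :
    EquicontinuousAt (fun χ : K => ⇑(χ : PontryaginDual G)) 1 := by
  intro U hU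
  obtain ⟨W, hWU, hWopen, hW1⟩ := mem_nhds_iff.mp (UniformSpace.ball_mem_nhds (1 : Circle) hU)
  have hmaps : ∀ᶠ f : PontryaginDual (PontryaginDual G) in 𝓝 (pontrEval G 1), MapsTo f K W :=
    (ContinuousMonoidHom.isInducing_toContinuousMap _ _).continuous.continuousAt.eventually
      (ContinuousMap.eventually_mapsTo (f := (pontrEval G 1).toContinuousMap) hK hWopen
        fun χ _ => by rw [map_one]; exact hW1)
  filter_upwards [hα.eventually hmaps] with x hx χ
  have hχx : (1, (χ : PontryaginDual G) x) ∈ U := hWU (hx χ.2)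
  simpa only [map_one] using hχx

variable [IsTopologicalGroup G]

theorem eventually_forall_div_mem_of_totallyBounded
    (hG : @TotallyBounded G (IsTopologicalGroup.rightUniformSpace G) univ)
    {K : Set (PontryaginDual G)}
    (hK : EquicontinuousAt (fun χ : K => ⇑(χ : PontryaginDual G)) 1)
    {χ₀ : PontryaginDual G} (hχ₀ : χ₀ ∈ K) {V : Set Circle} (hV : V ∈ 𝓝 1) :
    ∀ᶠ χ in 𝓝 χ₀, χ ∈ K → ∀ x, χ x / χ₀ x ∈ V := by
  let := IsTopologicalGroup.rightUniformSpace G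
  have := isUniformGroup_of_commGroup (G := G)
  obtain ⟨V₁, hV₁, hV₁V⟩ := exists_nhds_one_split hV
  obtain ⟨V₂, hV₂, hV₂V₁⟩ := exists_nhds_split_inv hV₁
  have hsmall : ∀ᶠ u in 𝓝 (1 : G), ∀ ψ : K, (ψ : PontryaginDual G) u ∈ V₂ := by
    filter_upwards [hK _ (mem_nhds_uniformity_iff_right.mp hV₂)] with u hu ψ
    exact hu ψ (map_one _)
  obtain ⟨t, ht, hcover⟩ := totallyBounded_iff_subset_finite_iUnion_nhds_one.mp hG _ hsmall
  have hnet : ∀ᶠ χ in 𝓝 χ₀, ∀ y ∈ t, χ y / χ₀ y ∈ V₁ := by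
    refine ht.eventually_all.2 fun y _ => ?_
    have hcont : Continuous fun χ : PontryaginDual G => χ y / χ₀ y :=
      (pontrEval G y).continuous.div_const _
    exact hcont.continuousAt.eventually (by simpa using hV₁)
  filter_upwards [hnet] with χ hχ hχK x
  obtain ⟨y, hy, u, hu, rfl⟩ :
      ∃ y ∈ t, ∃ u, (∀ ψ : K, (ψ : PontryaginDual G) u ∈ V₂) ∧ y * u = x := by
    simpa [Set.mem_smul] using hcover (mem_univ x)
  have hsplit : χ (y * u) / χ₀ (y * u) = (χ y / χ₀ y) * (χ u / χ₀ u) := by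
    simp only [map_mul]
    exact mul_div_mul_comm _ _ _ _
  rw [hsplit]
  exact hV₁V _ (hχ y hy) _ (hV₂V₁ _ (hu ⟨χ, hχK⟩) _ (hu ⟨χ₀, hχ₀⟩))

theorem isDiscrete_of_totallyBounded
    (hG : @TotallyBounded G (IsTopologicalGroup.rightUniformSpace G) univ)
    {K : Set (PontryaginDual G)}
    (hK : EquicontinuousAt (fun χ : K => ⇑(χ : PontryaginDual G)) 1) :
    IsDiscrete K := by
  refine isDiscrete_iff_nhdsNE.mpr fun χ₀ hχ₀ => ?_
  rw [inf_principal_eq_bot, mem_nhdsWithin_iff_exists_mem_nhds_inter]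
  refine ⟨_, eventually_forall_div_mem_of_totallyBounded hG hK hχ₀
    (Circle.centeredArc_mem_nhds_one (by positivity : 0 < π / 2)), ?_⟩
  rintro χ ⟨hclose, hne⟩ hχK
  exact hne (PontryaginDual.eq_of_forall_div_mem_centeredArc (hclose hχK))

theorem totallyBounded_of_isInducing_pontrEval (hα : IsInducing (pontrEval G))
    (hfin : ∀ K : Set (PontryaginDual G), IsCompact K → K.Finite) :
    @TotallyBounded G (IsTopologicalGroup.rightUniformSpace G) univ := by
  let φ : G →* (PontryaginDual G → Circle) := MonoidHom.pi fun χ => (χ : G →* Circle)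
  -- `φ` is definitionally `(⇑) ∘ toContinuousMap ∘ pontrEval G`.
  have hφ : IsInducing φ :=
    (ContinuousMap.isInducing_coeFn_of_forall_isCompact_finite hfin).comp
      ((ContinuousMonoidHom.isInducing_toContinuousMap _ _).comp hα)
  exact totallyBounded_of_isInducing_monoidHom hφ

end Dual

theorem statement7_general (G : Type*) [CommGroup G] [TopologicalSpace G] [IsTopologicalGroup G]
    (href : IsHomeomorph ⇑(pontrEval G)) :
    @TotallyBounded G (IsTopologicalGroup.rightUniformSpace G) Set.univ ↔
      ∀ K : Set (PontryaginDual G), IsCompact K → K.Finite := by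
  refine ⟨fun hG K hK => hK.finite ?_, totallyBounded_of_isInducing_pontrEval href.isInducing⟩
  exact isDiscrete_of_totallyBounded hG
    (equicontinuousAt_one_of_continuousAt_pontrEval href.continuous.continuousAt hK)

/-- A reflexive Hausdorff topological abelian group is precompact (= totally
bounded in its group uniformity) iff every compact subset of its dual group is finite. -/
theorem statement7 (G : Type*) [CommGroup G] [TopologicalSpace G] [IsTopologicalGroup G]
    [T2Space G] (href : IsHomeomorph ⇑(pontrEval G)) :
    @TotallyBounded G (IsTopologicalGroup.rightUniformSpace G) Set.univ ↔
      ∀ K : Set (PontryaginDual G), IsCompact K → K.Finite :=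
  statement7_general G href

end
end

section
/- There exists a dense subgroup G of the compact product group ℤ(2)^𝔠 (the product of continuum many copies of the two-element group, with the product topology) such that G is pseudocompact and every countable subgroup of G is h-embedded in G. -/
open Topology Filter Set

noncomputable section

instance (n : ℕ) : TopologicalSpace (ZMod n) := ⊥
instance (n : ℕ) : DiscreteTopology (ZMod n) := ⟨rfl⟩
instance (n : ℕ) : DiscreteTopology (Multiplicative (ZMod n)) := ⟨rfl⟩

instance (n : ℕ) : IsTopologicalGroup (Multiplicative (ZMod n)) where
  continuous_mul := continuous_of_discreteTopology
  continuous_inv := continuous_of_discreteTopology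


/-!
Suppose `N` is a symmetric matrix with entries in `ℤ(2)`, indexed by a set of size `𝔠`, in which
every prescribed pattern on countably many entries of a row is realized by some row. Let `G` be
the subgroup generated by its columns. As the columns realize every countable pattern of
coordinates, `G` is `G_δ`-dense in `ℤ(2)^𝔠`, hence dense and pseudocompact. Given a countable
`H ≤ G` and a character `f` of `H`, extend `f` to a character `F` of `G` (the circle group is
divisible). `H` lies in the subgroup generated by countably many columns, and the values of `F`
on those columns form a countable pattern; a row realizing it is a coordinate `i` such that
evaluation at `i` agrees with `F` on `H`, and evaluation is continuous.

Such a matrix is indexed by well-founded countably branching trees whose nodes label the edges to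
their children: a new node realizes any pattern on a countable set of trees placed below it.
-/

/-- For discrete `X`, this says that `S` is `G_δ`-dense in the product `ι → X`. -/
def RealizesCountablePatterns {ι X : Type*} (S : Set (ι → X)) : Prop :=
  ∀ T : Set ι, T.Countable → ∀ p : ι → X, ∃ g ∈ S, EqOn g p T

namespace RealizesCountablePatterns

variable {ι X : Type*} {S : Set (ι → X)}

theorem mono (hS : RealizesCountablePatterns S) {S' : Set (ι → X)} (h : S ⊆ S') :
    RealizesCountablePatterns S' := fun T hT p =>
  let ⟨g, hg, hgp⟩ := hS T hT p
  ⟨g, h hg, hgp⟩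

theorem exists_eqOn_eqOn (hS : RealizesCountablePatterns S) {T₁ T₂ : Set ι}
    (hT₁ : T₁.Countable) (hT₂ : T₂.Countable) {p₁ p₂ : ι → X} (h : EqOn p₁ p₂ (T₁ ∩ T₂)) :
    ∃ g ∈ S, EqOn g p₁ T₁ ∧ EqOn g p₂ T₂ := by
  classical
  obtain ⟨g, hg, hgp⟩ := hS (T₁ ∪ T₂) (hT₁.union hT₂) (T₁.piecewise p₁ p₂)
  refine ⟨g, hg, fun i hi => ?_, fun i hi => ?_⟩
  · rw [hgp (Or.inl hi), piecewise_eq_of_mem _ _ _ hi]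
  · by_cases hi₁ : i ∈ T₁
    · rw [hgp (Or.inr hi), piecewise_eq_of_mem _ _ _ hi₁, h ⟨hi₁, hi⟩]
    · rw [hgp (Or.inr hi), piecewise_eq_of_notMem _ _ _ hi₁]

end RealizesCountablePatterns

theorem exists_finset_forall_eqOn_mem {ι X : Type*} [TopologicalSpace X] {x : ι → X}
    {U : Set (ι → X)} (hU : U ∈ 𝓝 x) : ∃ F : Finset ι, ∀ g, EqOn g x F → g ∈ U := by
  rw [nhds_pi] at hU
  obtain ⟨F, t, ht, hFt⟩ := Filter.mem_pi'.1 hU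
  exact ⟨F, fun g hg => hFt fun i hi => hg hi ▸ mem_of_mem_nhds (ht i)⟩

theorem setOf_eqOn_mem_nhds {ι X : Type*} [TopologicalSpace X] [DiscreteTopology X]
    (x : ι → X) (F : Finset ι) : {g | EqOn g x F} ∈ 𝓝 x :=
  set_pi_mem_nhds F.finite_toSet fun i _ => mem_nhds_discrete.2 (mem_singleton (x i))

namespace RealizesCountablePatterns

variable {ι X : Type*} [TopologicalSpace X] {S : Set (ι → X)}

theorem dense (hS : RealizesCountablePatterns S) : Dense S := fun x =>
  mem_closure_iff_nhds.2 fun _ hU =>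
    let ⟨F, hF⟩ := exists_finset_forall_eqOn_mem hU
    let ⟨g, hg, hgx⟩ := hS F F.countable_toSet x
    ⟨g, hF g hgx, hg⟩

theorem exists_finset_forall_eqOn_abs_sub_lt_one {f : S → ℝ} (hf : Continuous f) (w : S) :
    ∃ F : Finset ι, ∀ u : S, EqOn (u : ι → X) w F → |f u - f w| < 1 := by
  obtain ⟨V, hV, hVU⟩ := (mem_nhds_subtype S w _).1
    (hf.continuousAt.preimage_mem_nhds (Metric.ball_mem_nhds (f w) one_pos))
  obtain ⟨F, hF⟩ := exists_finset_forall_eqOn_mem hV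
  exact ⟨F, fun u hu => hVU (hF u hu)⟩

variable [DiscreteTopology X] [CompactSpace X]

theorem exists_frequently_abs_sub_lt_two (hS : RealizesCountablePatterns S) {f : S → ℝ}
    (hf : Continuous f) (z : ℕ → S) : ∃ d : S, ∃ᶠ n in atTop, |f (z n) - f d| < 2 := by
  -- `d` copies a cluster point `p` of `z` on the coordinates controlling all `f (z n)`; when
  -- `z n` is close to `p`, some `y ∈ S` agrees with `d` and with `z n` where each is controlled.
  choose F hF using fun n => exists_finset_forall_eqOn_abs_sub_lt_one hf (z n)
  obtain ⟨p, -, hp⟩ := isCompact_univ.exists_mapClusterPt (f := atTop)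
    (u := fun n => (z n : ι → X)) (le_principal_iff.2 univ_mem)
  obtain ⟨d, hdS, hdp⟩ :=
    hS (⋃ n, (F n : Set ι)) (countable_iUnion fun n => (F n).countable_toSet) p
  obtain ⟨F₀, hF₀⟩ := exists_finset_forall_eqOn_abs_sub_lt_one hf ⟨d, hdS⟩
  refine ⟨⟨d, hdS⟩, (mapClusterPt_iff_frequently.1 hp _ (setOf_eqOn_mem_nhds p F₀)).mono
    fun n hn => ?_⟩
  have hdz : EqOn d (z n) (F₀ ∩ F n) := fun i hi =>
    (hdp (mem_iUnion.2 ⟨n, hi.2⟩)).trans (hn hi.1).symm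
  obtain ⟨y, hyS, hyd, hyz⟩ := hS.exists_eqOn_eqOn F₀.countable_toSet (F n).countable_toSet hdz
  have h₁ := hF₀ ⟨y, hyS⟩ hyd
  have h₂ := hF n ⟨y, hyS⟩ hyz
  calc |f (z n) - f ⟨d, hdS⟩| ≤ |f (z n) - f ⟨y, hyS⟩| + |f ⟨y, hyS⟩ - f ⟨d, hdS⟩| :=
        abs_sub_le ..
    _ < 2 := by rw [abs_sub_comm] at h₂; linarith

theorem isPseudocompact (hS : RealizesCountablePatterns S) : IsPseudocompact S := by
  intro f hf
  by_contra hb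
  have hz : ∀ n : ℕ, ∃ z : S, n < |f z| := fun n => by
    by_contra! h
    exact hb ((isBounded_iff_forall_norm_le).2 ⟨n, forall_mem_range.2 h⟩)
  choose z hz using hz
  obtain ⟨d, hd⟩ := hS.exists_frequently_abs_sub_lt_two hf z
  obtain ⟨n, hnd, hn⟩ := (hd.and_eventually (eventually_gt_atTop ⌈|f d| + 2⌉₊)).exists
  have := abs_sub_abs_le_abs_sub (f (z n)) (f d)
  have := Nat.lt_of_ceil_lt hn
  linarith [hz n]

end RealizesCountablePatterns

theorem ZMod.exists_toCircle_eq_of_pow_eq_one {n : ℕ} [NeZero n] {z : Circle} (hz : z ^ n = 1) :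
    ∃ j : ZMod n, ZMod.toCircle j = z := by
  obtain ⟨j, hj⟩ := (bijective_rootsOfUnityAddChar n).2
    ⟨toUnits z, by simp [mem_rootsOfUnity, ← map_pow, hz]⟩
  exact ⟨j, by simpa using congrArg (fun w : rootsOfUnity n Circle => (w : Circleˣ).val) hj⟩

instance : DivisibleBy (Additive Circle) ℤ :=
  Function.Surjective.divisibleBy (f := Circle.expHom) Circle.exp_surjective
    fun x n => Circle.expHom.map_zsmul n x

theorem Subgroup.exists_circle_extend {G : Type*} [CommGroup G] (H : Subgroup G)
    (f : H →* Circle) : ∃ F : G →* Circle, ∀ x : H, F x = f x :=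
  let ⟨F, hF⟩ := (Module.Baer.of_divisible (Additive Circle)).extension_property_addMonoidHom
    H.subtype.toAdditive Subtype.val_injective f.toAdditive
  ⟨MonoidHom.toAdditive.symm F, fun x => DFunLike.congr_fun hF x⟩

theorem Subgroup.exists_finite_of_mem_closure_range {P κ : Type*} [Group P] {v : κ → P} {x : P}
    (hx : x ∈ closure (range v)) : ∃ C : Set κ, C.Finite ∧ x ∈ closure (v '' C) := by
  induction hx using closure_induction with
  | mem x hx =>
    obtain ⟨c, rfl⟩ := hx
    exact ⟨{c}, finite_singleton c, subset_closure ⟨c, rfl, rfl⟩⟩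
  | one => exact ⟨∅, finite_empty, one_mem _⟩
  | mul x y _ _ hx hy =>
    obtain ⟨C, hC, hxC⟩ := hx
    obtain ⟨D, hD, hyD⟩ := hy
    exact ⟨C ∪ D, hC.union hD, mul_mem (closure_mono (image_mono subset_union_left) hxC)
      (closure_mono (image_mono subset_union_right) hyD)⟩
  | inv x _ hx =>
    obtain ⟨C, hC, hxC⟩ := hx
    exact ⟨C, hC, inv_mem hxC⟩

theorem MonoidHom.eq_of_coe_mem_closure {P Q : Type*} [Group P] [Group Q] {G : Subgroup P}
    {φ ψ : G →* Q} {t : Set P} (ht : t ⊆ G) (h : ∀ y : G, (y : P) ∈ t → φ y = ψ y) {x : G}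
    (hx : (x : P) ∈ Subgroup.closure t) : φ x = ψ x := by
  have : Subgroup.closure t ≤ (φ.eqLocus ψ).map G.subtype :=
    (Subgroup.closure_le _).2 fun y hy => ⟨⟨y, ht hy⟩, h _ hy, rfl⟩
  obtain ⟨y, hy, hyx⟩ := this hx
  rwa [Subtype.ext hyx] at hy

theorem isHEmbedded_of_realizesCountablePatterns {ι κ : Type*} {n : ℕ} [NeZero n]
    {v : κ → ι → Multiplicative (ZMod n)}
    (hv : RealizesCountablePatterns (range fun i c => v c i))
    (H : Subgroup (Subgroup.closure (range v)))
    (hH : (H : Set (Subgroup.closure (range v))).Countable) :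
    IsHEmbedded H := by
  intro f
  obtain ⟨F, hF⟩ := H.exists_circle_extend f
  have hvG : ∀ c, v c ∈ Subgroup.closure (range v) := fun c => Subgroup.subset_closure ⟨c, rfl⟩
  have hv1 : ∀ c, (⟨v c, hvG c⟩ : Subgroup.closure (range v)) ^ n = 1 := fun c =>
    Subtype.ext (funext fun i => by simpa using pow_card_eq_one (x := v c i))
  choose η hη using fun c => ZMod.exists_toCircle_eq_of_pow_eq_one (z := F ⟨v c, hvG c⟩)
    (by rw [← map_pow, hv1, map_one])
  have : Countable H := hH.to_subtype
  choose C hC hxC using fun x : H =>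
    Subgroup.exists_finite_of_mem_closure_range (x : Subgroup.closure (range v)).2
  obtain ⟨_, ⟨i, rfl⟩, hi⟩ := hv (⋃ x, C x) (countable_iUnion fun x => (hC x).countable)
    fun c => Multiplicative.ofAdd (η c)
  let χ : Subgroup.closure (range v) →* Circle :=
    (ZMod.toCircle (N := n)).toMonoidHom.comp
      ((Pi.evalMonoidHom (fun _ : ι => Multiplicative (ZMod n)) i).comp
        (Subgroup.closure _).subtype)
  refine ⟨χ, (continuous_of_discreteTopology (f := ZMod.toCircle.toMonoidHom)).comp
    ((continuous_apply i).comp continuous_subtype_val), fun x => ?_⟩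
  rw [← hF x]
  refine MonoidHom.eq_of_coe_mem_closure (image_subset_iff.2 fun c _ => hvG c) ?_ (hxC x)
  rintro ⟨_, hyG⟩ ⟨c, hc, rfl⟩
  have hic : v c i = Multiplicative.ofAdd (η c) := hi (mem_iUnion_of_mem x hc)
  simp [χ, hic, hη]

/-- Leaves, and nodes `⟨some ξ, s⟩` with children `s n` whose edges are labelled by `ξ n`. -/
def LabelledTree.Arity (X : Type) : Option (ℕ → X) → Type
  | none => Empty
  | some _ => ℕ

abbrev LabelledTree (X : Type) : Type := WType (LabelledTree.Arity X)

namespace LabelledTree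

variable {X : Type}

def leaf : LabelledTree X := ⟨none, Empty.elim⟩

def node (s : ℕ → LabelledTree X) (ξ : ℕ → X) : LabelledTree X := ⟨some ξ, s⟩

def IsChild (a : LabelledTree X) : LabelledTree X → Prop
  | ⟨_, s⟩ => ∃ i, s i = a

theorem IsChild.asymm {a b : LabelledTree X} (h : IsChild a b) : ¬IsChild b a := by
  induction b generalizing a with
  | mk o s ih =>
    obtain ⟨i, rfl⟩ := h
    exact fun h' => ih i h' ⟨i, rfl⟩

section Label

variable [CommMonoid X]

open Classical in
def label : LabelledTree X → LabelledTree X → X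
  | ⟨some ξ, s⟩, b => if h : ∃ n, s n = b then ξ h.choose else 1
  | ⟨none, _⟩, _ => 1

theorem label_eq_one_of_not_isChild {a b : LabelledTree X} (h : ¬IsChild b a) :
    label a b = 1 := by
  rcases a with ⟨_ | ξ, s⟩
  · rfl
  · exact dif_neg h

theorem label_node_comp (s : ℕ → LabelledTree X) (η : LabelledTree X → X) (n : ℕ) :
    label (node s (η ∘ s)) (s n) = η (s n) := by
  have h : ∃ m, s m = s n := ⟨n, rfl⟩
  exact (dif_pos h).trans (congrArg η h.choose_spec)

/-- At most one factor differs from `1`, since the child relation is asymmetric. -/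
def matrix (a b : LabelledTree X) : X := label a b * label b a

theorem matrix_comm (a b : LabelledTree X) : matrix a b = matrix b a := mul_comm _ _

theorem matrix_node_comp (s : ℕ → LabelledTree X) (η : LabelledTree X → X) (n : ℕ) :
    matrix (node s (η ∘ s)) (s n) = η (s n) := by
  have : IsChild (s n) (node s (η ∘ s)) := ⟨n, rfl⟩
  rw [matrix, label_node_comp, label_eq_one_of_not_isChild this.asymm, mul_one]

theorem realizesCountablePatterns_range_matrix :
    RealizesCountablePatterns (range (matrix (X := X))) := by
  intro T hT η
  obtain ⟨s, hs⟩ := (hT.insert leaf).exists_eq_range (insert_nonempty _ _)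
  refine ⟨_, ⟨node s (η ∘ s), rfl⟩, fun a ha => ?_⟩
  obtain ⟨n, rfl⟩ : a ∈ range s := hs ▸ mem_insert_of_mem _ ha
  exact matrix_node_comp s η n

end Label

open Cardinal

theorem mk_eq_continuum {X : Type} (h₂ : 2 ≤ #X) (hX : #X ≤ 𝔠) : #(LabelledTree X) = 𝔠 := by
  have hseq : #(ℕ → X) = 𝔠 := by
    rw [mk_arrow, lift_id, lift_uzero, mk_nat]
    refine le_antisymm ?_ ?_
    · exact (power_le_power_right hX).trans continuum_power_aleph0.le
    · exact two_power_aleph0 ▸ power_le_power_right h₂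
  refine le_antisymm (WType.cardinalMk_le_of_le ?_) ?_
  · calc (sum fun o => 𝔠 ^ #(Arity X o)) ≤ sum fun _ : Option (ℕ → X) => 𝔠 :=
          sum_le_sum _ _ fun o => by
            rcases o with _ | ξ
            · simpa [Arity] using (nat_lt_continuum 1).le
            · simp [Arity, continuum_power_aleph0]
      _ = 𝔠 := by
        rw [sum_const', mk_option, hseq, add_one_eq aleph0_le_continuum,
          mul_eq_self aleph0_le_continuum]
  · refine hseq ▸ mk_le_of_injective (f := node fun _ => leaf) fun ξ ξ' h => ?_
    injection h with h
    exact Option.some_injective _ h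

end LabelledTree

theorem RealizesCountablePatterns.range_comp_equiv {ι κ X : Type*} {M : κ → κ → X}
    (hM : RealizesCountablePatterns (range M)) (e : ι ≃ κ) :
    RealizesCountablePatterns (range fun i j => M (e i) (e j)) := by
  intro T hT p
  obtain ⟨_, ⟨t, rfl⟩, ht⟩ := hM (e '' T) (hT.image e) (p ∘ e.symm)
  exact ⟨_, ⟨e.symm t, rfl⟩, fun i hi => by simpa using ht (mem_image_of_mem e hi)⟩

theorem exists_symm_realizesCountablePatterns_range :
    ∃ N : ℝ → ℝ → Multiplicative (ZMod 2),
      (∀ i j, N i j = N j i) ∧ RealizesCountablePatterns (range N) := by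
  obtain ⟨e⟩ : Nonempty (ℝ ≃ LabelledTree (Multiplicative (ZMod 2))) := Cardinal.eq.1 <| by
    rw [Cardinal.mk_real, LabelledTree.mk_eq_continuum (by simp)
      (by simpa using (Cardinal.nat_lt_continuum 2).le)]
  exact ⟨fun i j => LabelledTree.matrix (e i) (e j), fun i j => LabelledTree.matrix_comm _ _,
    LabelledTree.realizesCountablePatterns_range_matrix.range_comp_equiv e⟩

/-- There exists a dense subgroup `G` of the compact product group `ℤ(2)^𝔠`
(formalized as the product of `ℝ`-many, i.e. continuum many, copies of the two-element
group with the product topology) such that `G` is pseudocompact and every countable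
subgroup of `G` is h-embedded in `G`. -/
theorem statement12 :
    ∃ G : Subgroup (ℝ → Multiplicative (ZMod 2)),
      Dense (G : Set (ℝ → Multiplicative (ZMod 2))) ∧
      IsPseudocompact G ∧
      ∀ H : Subgroup G, (H : Set G).Countable → IsHEmbedded H := by
  obtain ⟨N, hNsymm, hN⟩ := exists_symm_realizesCountablePatterns_range
  have hG : RealizesCountablePatterns (Subgroup.closure (range N) : Set (ℝ → _)) :=
    hN.mono Subgroup.subset_closure
  refine ⟨Subgroup.closure (range N), hG.dense, hG.isPseudocompact, fun H hH => ?_⟩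
  have hNt : (fun i c => N c i) = N := funext₂ fun i c => hNsymm c i
  exact isHEmbedded_of_realizesCountablePatterns (hNt ▸ hN) H hH

end
end

section
/- Let I be an uncountable index set, let n ≥ 2 be a natural number, and let Σ = {x ∈ ℤ(n)^I : the support {i ∈ I : x(i) ≠ 0} is countable} be the Σ-product, a dense subgroup of the compact product group ℤ(n)^I. Then the evaluation map α_Σ : Σ → Σ^∧∧ is continuous but not surjective; in particular, Σ is an ω-bounded (hence countably compact) noncompact group that is not reflexive. -/
open Topology Filter Set

noncomputable section

/-- The Σ-product `Σ = {x ∈ ℤ(n)^I : supp(x) is countable}`, a subgroup of the product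
group `ℤ(n)^I`. -/
def SigmaProd (I : Type*) (n : ℕ) : Subgroup (I → Multiplicative (ZMod n)) where
  carrier := {x | {i | x i ≠ 1}.Countable}
  one_mem' := by
    have h : {i : I | (1 : I → Multiplicative (ZMod n)) i ≠ 1} = (∅ : Set I) := by
      ext i; simp
    show {i : I | (1 : I → Multiplicative (ZMod n)) i ≠ 1}.Countable
    rw [h]; exact Set.countable_empty
  mul_mem' {x y} hx hy := by
    refine Set.Countable.mono ?_ (hx.union hy)
    intro i hi
    by_contra hmem
    simp only [Set.mem_union, Set.mem_setOf_eq, not_or, not_not] at hmem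
    exact hi (by simp only [Set.mem_setOf_eq, not_not, Pi.mul_apply, hmem.1, hmem.2, mul_one])
  inv_mem' {x} hx := by
    refine Set.Countable.mono ?_ hx
    intro i hi
    simp only [Set.mem_setOf_eq, Pi.inv_apply, ne_eq, inv_eq_one] at hi ⊢
    exact hi

/-!
A countable subset of `Σ` lies in `{x | mulSupport x ⊆ A}` for a countable `A`, which is closed in
the compact group `ℤ(n)^I`; this gives ω-boundedness, while `Σ` is a dense proper subgroup, so it
is not closed and hence not compact.

The dual of `Σ` is discrete: characters of `Σ` take values in the `n`-th roots of unity, so a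
character that maps the compact set of elements supported on at most one coordinate into a small
neighbourhood of `1` kills every `Pi.mulSingle i a`, hence the dense subgroup of finitely supported
elements they generate, hence (its kernel being closed) all of `Σ`. Over a discrete dual,
evaluation is continuous. The same smallness argument shows that a character of `Σ` only sees
finitely many coordinates, so `χ ↦ ∏ᶠ i, χ (Pi.mulSingle i a)` is an element of `Σ^∧∧`: evaluation
at the constant function `a`. It is not of the form `α_Σ x`, because `x` has countable support and
the coordinate character at any `i` outside that support separates the two.
-/

open Function

theorem Circle.finite_setOf_pow_eq_one {n : ℕ} (hn : n ≠ 0) :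
    {z : Circle | z ^ n = 1}.Finite := by
  refine ((Polynomial.nthRoots n (1 : ℂ)).toFinset.finite_toSet.preimage
    Circle.coe_injective.injOn).subset fun z hz => ?_
  have hz : z ^ n = 1 := hz
  rw [mem_preimage, Finset.mem_coe, Multiset.mem_toFinset,
    Polynomial.mem_nthRoots (Nat.pos_of_ne_zero hn)]
  exact congrArg ((↑) : Circle → ℂ) hz

theorem Circle.eventually_pow_eq_one_imp_eq_one {n : ℕ} (hn : n ≠ 0) :
    ∀ᶠ z in 𝓝 (1 : Circle), z ^ n = 1 → z = 1 := by
  filter_upwards [((finite_setOf_pow_eq_one hn).sdiff (t := {1})).isClosed.compl_mem_nhds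
    (by simp)] with z hz hzn
  by_contra hz1
  exact hz ⟨hzn, hz1⟩

theorem ContinuousMonoidHom.isOpen_ker_of_pow_eq_one {G : Type*} [Group G] [TopologicalSpace G]
    [SeparatelyContinuousMul G] {n : ℕ} (hn : n ≠ 0) (hG : ∀ x : G, x ^ n = 1)
    (χ : G →ₜ* Circle) :
    IsOpen (χ.toMonoidHom.ker : Set G) := by
  refine Subgroup.isOpen_of_mem_nhds _ (g := 1) ?_
  have hχ : Tendsto χ (𝓝 1) (𝓝 1) := map_one χ ▸ χ.continuous.tendsto 1
  filter_upwards [hχ.eventually (Circle.eventually_pow_eq_one_imp_eq_one hn)] with x hx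
  exact hx (by rw [← map_pow, hG, map_one])

theorem continuous_pontrEval_of_discreteTopology (G : Type*) [CommGroup G] [TopologicalSpace G]
    [DiscreteTopology (PontryaginDual G)] : Continuous (pontrEval G) :=
  ContinuousMonoidHom.continuous_of_continuous_uncurry _
    (continuous_prod_of_discrete_right.mpr fun χ => map_continuous χ)

section Pi

variable {ι M : Type*} [TopologicalSpace M] [One M]

theorem dense_setOf_mulSupport_finite : Dense {x : ι → M | (mulSupport x).Finite} := by
  classical
  intro x
  refine mem_closure_of_tendsto (f := fun F : Finset ι => F.piecewise x 1) (b := atTop) ?_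
    (Eventually.of_forall fun F => F.finite_toSet.subset ?_)
  · refine tendsto_pi_nhds.2 fun i => tendsto_const_nhds.congr' ?_
    filter_upwards [eventually_ge_atTop {i}] with F hF
    exact (F.piecewise_eq_of_mem _ _ (hF (Finset.mem_singleton_self i))).symm
  · exact mulSupport_subset_iff'.2 fun i hi => F.piecewise_eq_of_notMem _ _ hi

theorem exists_finset_subset_of_mem_nhds_one {U : Set (ι → M)} (hU : U ∈ 𝓝 1) :
    ∃ F : Finset ι, {x | ∀ i ∈ F, x i = 1} ⊆ U := by
  rw [nhds_pi, Filter.mem_pi'] at hU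
  obtain ⟨F, t, ht, hFt⟩ := hU
  exact ⟨F, fun x hx => hFt fun i hi => hx i hi ▸ mem_of_mem_nhds (ht i)⟩

variable [T1Space M]

theorem isClosed_setOf_mulSupport_subset (A : Set ι) :
    IsClosed {x : ι → M | mulSupport x ⊆ A} := by
  simp only [mulSupport_subset_iff', ofPred_forall]
  exact isClosed_biInter fun i _ => isClosed_singleton.preimage (continuous_apply i)

theorem isClosed_setOf_mulSupport_subsingleton :
    IsClosed {x : ι → M | (mulSupport x).Subsingleton} := by
  have hset : {x : ι → M | (mulSupport x).Subsingleton} =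
      ⋂ (j) (k), {x | x j ≠ 1 → x k ≠ 1 → j = k} := by
    ext x
    simp only [mem_iInter, mem_ofPred_eq]
    exact ⟨fun h j k hj hk => h hj hk, fun h j hj k hk => h j k hj hk⟩
  rw [hset]
  exact isClosed_iInter fun j => isClosed_iInter fun k =>
    isClosed_imp (isOpen_compl_singleton.preimage (continuous_apply j)) <|
      isClosed_imp (isOpen_compl_singleton.preimage (continuous_apply k)) isClosed_const

end Pi

namespace SigmaProd

variable {I : Type*} {n : ℕ}

theorem mem_iff {x : I → Multiplicative (ZMod n)} :
    x ∈ SigmaProd I n ↔ (mulSupport x).Countable :=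
  Iff.rfl

theorem pow_card_eq_one (x : SigmaProd I n) : x ^ n = 1 := by
  ext i
  rw [Subgroup.coe_pow, Pi.pow_apply, ← ofAdd_toAdd ((x : I → Multiplicative (ZMod n)) i),
    ← ofAdd_nsmul, nsmul_eq_mul, ZMod.natCast_self, zero_mul, ofAdd_zero]
  rfl

theorem dense : Dense (SigmaProd I n : Set (I → Multiplicative (ZMod n))) :=
  _root_.dense_setOf_mulSupport_finite.mono fun _ hx => hx.countable

theorem not_compactSpace (hI : ¬(univ : Set I).Countable) [Nontrivial (ZMod n)] :
    ¬CompactSpace (SigmaProd I n) := by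
  intro _
  have hclosed : IsClosed (SigmaProd I n : Set (I → Multiplicative (ZMod n))) :=
    (isCompact_iff_compactSpace.2 ‹_›).isClosed
  have hconst : (fun _ => Multiplicative.ofAdd 1) ∈ SigmaProd I n := by
    rw [← SetLike.mem_coe, ← hclosed.closure_eq, dense.closure_eq]
    trivial
  rw [mem_iff, mulSupport_const (by simp)] at hconst
  exact hI hconst

section mulSingle

variable [DecidableEq I]

protected def mulSingle (i : I) (a : Multiplicative (ZMod n)) : SigmaProd I n :=
  ⟨Pi.mulSingle i a, (countable_singleton i).mono Pi.mulSupport_mulSingle_subset⟩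

@[simp]
theorem coe_mulSingle (i : I) (a : Multiplicative (ZMod n)) :
    (SigmaProd.mulSingle i a : I → Multiplicative (ZMod n)) = Pi.mulSingle i a :=
  rfl

theorem eq_top_of_isClosed_of_mulSingle_mem {H : Subgroup (SigmaProd I n)}
    (hH : IsClosed (H : Set (SigmaProd I n))) (hsingle : ∀ i a, SigmaProd.mulSingle i a ∈ H) :
    H = ⊤ := by
  have hfin : ∀ x : SigmaProd I n, (mulSupport (x : I → Multiplicative (ZMod n))).Finite →
      x ∈ H := by
    intro x hx
    have hx_eq : x = ∏ i ∈ hx.toFinset, SigmaProd.mulSingle i ((x : I → _) i) := by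
      ext j
      by_cases hj : (x : I → Multiplicative (ZMod n)) j = 1 <;>
        simp [Finset.prod_apply, hj]
    exact hx_eq ▸ H.prod_mem fun i _ => hsingle i _
  have hdense :
      Dense {x : SigmaProd I n | (mulSupport (x : I → Multiplicative (ZMod n))).Finite} := by
    refine IsInducing.subtypeVal.dense_iff.2 fun x => closure_mono ?_
      (_root_.dense_setOf_mulSupport_finite (x : I → Multiplicative (ZMod n)))
    intro y (hy : (mulSupport y).Finite)
    exact ⟨⟨y, hy.countable⟩, hy, rfl⟩
  exact eq_top_iff.2 fun x _ => hH.closure_subset_iff.2 hfin (hdense x)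

end mulSingle

variable [NeZero n]

theorem isCompact_preimage_coe {T : Set (I → Multiplicative (ZMod n))} (hT : IsClosed T)
    (hTsub : T ⊆ SigmaProd I n) : IsCompact (((↑) : SigmaProd I n → _) ⁻¹' T) :=
  IsInducing.subtypeVal.isCompact_preimage' hT.isCompact (by simpa using hTsub)

theorem isCompact_closure_of_countable {S : Set (SigmaProd I n)} (hS : S.Countable) :
    IsCompact (closure S) := by
  set A := ⋃ x ∈ S, mulSupport (x : I → Multiplicative (ZMod n))
  have hA : A.Countable := hS.biUnion fun x _ => x.2
  have hT := isClosed_setOf_mulSupport_subset (M := Multiplicative (ZMod n)) A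
  have hST : S ⊆ (↑) ⁻¹' {y : I → Multiplicative (ZMod n) | mulSupport y ⊆ A} :=
    fun x hx => subset_biUnion_of_mem
      (u := fun x : SigmaProd I n => mulSupport (x : I → Multiplicative (ZMod n))) hx
  exact (isCompact_preimage_coe hT fun y hy => hA.mono hy).of_isClosed_subset isClosed_closure
    (closure_minimal hST (hT.preimage continuous_subtype_val))

instance : DiscreteTopology (PontryaginDual (SigmaProd I n)) := by
  classical
  obtain ⟨V, hV, hVo, hV1⟩ :=
    eventually_nhds_iff.1 (Circle.eventually_pow_eq_one_imp_eq_one (NeZero.ne n))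
  have hC := isCompact_preimage_coe (isClosed_setOf_mulSupport_subsingleton (ι := I)
    (M := Multiplicative (ZMod n))) fun _ hx => hx.countable
  refine discreteTopology_of_isOpen_singleton_one ?_
  have hN : IsOpen {χ : PontryaginDual (SigmaProd I n) | MapsTo χ _ V} :=
    (ContinuousMap.isOpen_setOfPred_mapsTo hC hVo).preimage
      (ContinuousMonoidHom.isInducing_toContinuousMap _ _).continuous
  convert hN using 1
  ext χ
  refine ⟨fun hχ x _ => by rw [mem_singleton_iff.1 hχ]; exact hV1, fun hχ => ?_⟩
  have hker : χ.toMonoidHom.ker = ⊤ := by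
    refine eq_top_of_isClosed_of_mulSingle_mem (isClosed_singleton.preimage χ.continuous)
      fun i a => hV _ (hχ ?_) (by rw [← map_pow, pow_card_eq_one, map_one])
    exact subsingleton_singleton.anti Pi.mulSupport_mulSingle_subset
  exact ContinuousMonoidHom.ext fun x => (hker ▸ Subgroup.mem_top x : x ∈ χ.toMonoidHom.ker)

def coordChar (i : I) : PontryaginDual (SigmaProd I n) where
  toMonoidHom :=
    ZMod.toCircle.toMonoidHom.comp ((Pi.evalMonoidHom _ i).comp (SigmaProd I n).subtype)
  continuous_toFun :=
    (continuous_of_discreteTopology (f := ZMod.toCircle.toMonoidHom)).comp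
      ((continuous_apply i).comp continuous_subtype_val)

theorem coordChar_apply (i : I) (x : SigmaProd I n) :
    coordChar i x = ZMod.toCircle (Multiplicative.toAdd ((x : I → Multiplicative (ZMod n)) i)) :=
  rfl

variable [DecidableEq I]

theorem finite_mulSupport_apply_mulSingle (χ : PontryaginDual (SigmaProd I n))
    (a : Multiplicative (ZMod n)) :
    (mulSupport fun i => χ (SigmaProd.mulSingle i a)).Finite := by
  have hker : (χ.toMonoidHom.ker : Set (SigmaProd I n)) ∈ 𝓝 1 :=
    (χ.isOpen_ker_of_pow_eq_one (NeZero.ne n) pow_card_eq_one).mem_nhds (one_mem _)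
  obtain ⟨U, hU, hUker⟩ := (mem_nhds_subtype _ _ _).1 hker
  obtain ⟨F, hF⟩ := exists_finset_subset_of_mem_nhds_one hU
  refine F.finite_toSet.subset fun i hi => by_contra fun hiF => hi <| hUker <| hF fun j hj => ?_
  exact Pi.mulSingle_eq_of_ne (M := fun _ => Multiplicative (ZMod n))
    (ne_of_mem_of_not_mem hj hiF) a

def constEval (a : Multiplicative (ZMod n)) :
    PontryaginDual (PontryaginDual (SigmaProd I n)) where
  toFun χ := ∏ᶠ i, χ (SigmaProd.mulSingle i a)
  map_one' := finprod_one
  map_mul' χ ψ := finprod_mul_distrib (finite_mulSupport_apply_mulSingle χ a)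
    (finite_mulSupport_apply_mulSingle ψ a)
  continuous_toFun := continuous_of_discreteTopology

theorem constEval_coordChar (a : Multiplicative (ZMod n)) (i : I) :
    constEval a (coordChar i) = ZMod.toCircle (Multiplicative.toAdd a) := by
  change ∏ᶠ j, coordChar i (SigmaProd.mulSingle j a) = _
  rw [finprod_eq_single _ i fun j hj => ?_]
  · simp [coordChar_apply]
  · simp [coordChar_apply, Pi.mulSingle_eq_of_ne' hj]

theorem not_surjective_pontrEval (hI : ¬(univ : Set I).Countable) [Nontrivial (ZMod n)] :
    ¬Surjective (pontrEval (SigmaProd I n)) := by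
  intro h
  obtain ⟨x, hx⟩ := h (constEval (Multiplicative.ofAdd 1))
  obtain ⟨i, hi⟩ : ∃ i, (x : I → Multiplicative (ZMod n)) i = 1 := by
    by_contra! h
    exact hI (x.2.mono fun i _ => h i)
  have h := DFunLike.congr_fun hx (coordChar i)
  rw [constEval_coordChar, toAdd_ofAdd] at h
  have h' : ZMod.toCircle (1 : ZMod n) = ZMod.toCircle (0 : ZMod n) := by
    rw [← h, AddChar.map_zero_eq_one]
    change coordChar i x = 1
    simp [coordChar_apply, hi]
  exact one_ne_zero (ZMod.injective_toCircle h')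

end SigmaProd

/-- For an uncountable index set `I` and `n ≥ 2`, the Σ-product
`Σ ⊆ ℤ(n)^I` is a dense subgroup of `ℤ(n)^I`, its evaluation map `α_Σ` is continuous but
not surjective; in particular `Σ` is ω-bounded (the closure of every countable subset is
compact), hence countably compact, noncompact, and not reflexive. -/
theorem statement17 (I : Type) (hI : ¬(Set.univ : Set I).Countable) (n : ℕ) (hn : 2 ≤ n) :
    Dense (SigmaProd I n : Set (I → Multiplicative (ZMod n))) ∧
    Continuous ⇑(pontrEval (SigmaProd I n)) ∧
    ¬Function.Surjective ⇑(pontrEval (SigmaProd I n)) ∧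
    (∀ S : Set (SigmaProd I n), S.Countable → IsCompact (closure S)) ∧
    ¬CompactSpace (SigmaProd I n) ∧
    ¬IsHomeomorph ⇑(pontrEval (SigmaProd I n)) := by
  classical
  have : Fact (1 < n) := ⟨hn⟩
  have hα := SigmaProd.not_surjective_pontrEval (n := n) hI
  exact ⟨SigmaProd.dense, continuous_pontrEval_of_discreteTopology _, hα,
    fun _ => SigmaProd.isCompact_closure_of_countable, SigmaProd.not_compactSpace hI,
    fun h => hα h.surjective⟩

end
end
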